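/- (i) Let z ∈ ℂ and let F, G : ℝ → M₂(ℂ) be twice differentiable 2×2-matrix-valued functions each of whose columns solves ℋf = zf. Then the matrix Wronskian 𝒲[F,G](x) is independent of x ∈ ℝ. (ii) If in addition 𝒲[F,F] = 0 or 𝒲[G,G] = 0, then det 𝒲[F,G] = 0 if and only if there exist vectors a, b ∈ ℂ², not both zero, such that F(x)a + G(x)b = 0 for all x ∈ ℝ. -/

import Mathlib

noncomputable section

open Real MeasureTheory Matrix

/-- The matrix Schrödinger operator `ℋ` acting on `f = (f₁, f₂) : ℝ → ℂ²`:
`ℋf = (−f₁'' + f₁ + V₁f₁ + V₂f₂, f₂'' − f₂ − V₂f₁ − V₁f₂)`. -/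
def matH (V₁ V₂ : ℝ → ℝ) (f : ℝ → ℂ × ℂ) (x : ℝ) : ℂ × ℂ :=
  (-(iteratedDeriv 2 (fun y => (f y).1) x) + (f x).1
      + (V₁ x : ℂ) * (f x).1 + (V₂ x : ℂ) * (f x).2,
    iteratedDeriv 2 (fun y => (f y).2) x - (f x).2
      - (V₂ x : ℂ) * (f x).1 - (V₁ x : ℂ) * (f x).2)

/-- `f` is a (classical, twice continuously differentiable) solution of `ℋf = z f`. -/
def IsSolution (V₁ V₂ : ℝ → ℝ) (z : ℂ) (f : ℝ → ℂ × ℂ) : Prop :=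
  ContDiff ℝ 2 f ∧ ∀ x : ℝ, matH V₁ V₂ f x = z • f x

/-- The potentials `V₁, V₂` are smooth, even, and exponentially decaying with rate `γ ∈ (0,1)`,
together with all derivatives. -/
def PotentialHyp (γ : ℝ) (V₁ V₂ : ℝ → ℝ) : Prop :=
  0 < γ ∧ γ < 1 ∧ ContDiff ℝ (⊤ : ℕ∞) V₁ ∧ ContDiff ℝ (⊤ : ℕ∞) V₂ ∧
    (∀ x, V₁ (-x) = V₁ x) ∧ (∀ x, V₂ (-x) = V₂ x) ∧
    ∀ k : ℕ, ∃ C : ℝ, ∀ x : ℝ,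
      |iteratedDeriv k V₁ x| + |iteratedDeriv k V₂ x| ≤ C * Real.exp (-γ * |x|)

/-- `μ(λ) = √(λ² + 2)`. -/
def mu (lam : ℝ) : ℝ := Real.sqrt (lam ^ 2 + 2)

/-- Entrywise derivative of a matrix-valued function. -/
def mderiv (F : ℝ → Matrix (Fin 2) (Fin 2) ℂ) (x : ℝ) : Matrix (Fin 2) (Fin 2) ℂ :=
  Matrix.of fun i j => deriv (fun y => F y i j) x

/-- The matrix Wronskian `𝒲[F,G](x) = F'(x)ᵀ G(x) − F(x)ᵀ G'(x)`. -/
def mWr (F G : ℝ → Matrix (Fin 2) (Fin 2) ℂ) (x : ℝ) : Matrix (Fin 2) (Fin 2) ℂ :=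
  (mderiv F x)ᵀ * G x - (F x)ᵀ * mderiv G x

/-- The `j`-th column of a matrix-valued function, as a `ℂ²`-valued function. -/
def col (F : ℝ → Matrix (Fin 2) (Fin 2) ℂ) (j : Fin 2) : ℝ → ℂ × ℂ :=
  fun x => (F x 0 j, F x 1 j)

def Acoef (V₁ V₂ : ℝ → ℝ) (z : ℂ) (x : ℝ) : Fin 2 → Fin 2 → ℂ :=
  ![![1 + V₁ x - z, V₂ x], ![V₂ x, 1 + V₁ x + z]]

lemma entry_contDiff {V₁ V₂ : ℝ → ℝ} {z : ℂ} {F : ℝ → Matrix (Fin 2) (Fin 2) ℂ}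
    (hF : ∀ j : Fin 2, IsSolution V₁ V₂ z (col F j)) (i j : Fin 2) :
    ContDiff ℝ 2 (fun t => F t i j) := by
  fin_cases i
  · exact (hF j).1.fst
  · exact (hF j).1.snd

lemma entry_ode {V₁ V₂ : ℝ → ℝ} {z : ℂ} {F : ℝ → Matrix (Fin 2) (Fin 2) ℂ}
    (hF : ∀ j : Fin 2, IsSolution V₁ V₂ z (col F j)) (i j : Fin 2) (x : ℝ) :
    deriv (deriv (fun t => F t i j)) x
      = Acoef V₁ V₂ z x i 0 * F x 0 j + Acoef V₁ V₂ z x i 1 * F x 1 j := by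
  have h := (hF j).2 x
  rw [Prod.ext_iff] at h
  obtain ⟨h1, h2⟩ := h
  simp only [matH, _root_.col, Prod.smul_fst, Prod.smul_snd, smul_eq_mul] at h1 h2
  have e2 : ∀ g : ℝ → ℂ, iteratedDeriv 2 g = deriv (deriv g) := by
    intro g
    rw [show (2:ℕ) = 1 + 1 from rfl, iteratedDeriv_succ, iteratedDeriv_one]
  rw [e2] at h1 h2
  fin_cases i <;>
    simp only [Acoef, Fin.isValue, Fin.mk_zero, Fin.mk_one, Matrix.cons_val_zero,
      Matrix.cons_val_one, Matrix.head_cons]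
  · linear_combination -h1
  · linear_combination h2


variable {V₁ V₂ : ℝ → ℝ} {z : ℂ} {F G : ℝ → Matrix (Fin 2) (Fin 2) ℂ}

lemma entry_diff (hF : ∀ j : Fin 2, IsSolution V₁ V₂ z (col F j)) (i j : Fin 2) :
    Differentiable ℝ (fun t => F t i j) :=
  (entry_contDiff hF i j).differentiable (by norm_num)

lemma entry_deriv_contDiff (hF : ∀ j : Fin 2, IsSolution V₁ V₂ z (col F j)) (i j : Fin 2) :
    ContDiff ℝ 1 (deriv (fun t => F t i j)) := by
  have h := entry_contDiff hF i j
  rw [show (2 : WithTop ℕ∞) = 1 + 1 by norm_num, contDiff_succ_iff_deriv] at h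
  exact h.2.2

lemma entry_hd2 (hF : ∀ j : Fin 2, IsSolution V₁ V₂ z (col F j)) (i j : Fin 2) (x : ℝ) :
    HasDerivAt (deriv (fun t => F t i j))
      (Acoef V₁ V₂ z x i 0 * F x 0 j + Acoef V₁ V₂ z x i 1 * F x 1 j) x := by
  have h := (((entry_deriv_contDiff hF i j).differentiable (by norm_num)) x).hasDerivAt
  rwa [entry_ode hF i j x] at h

lemma mWr_apply (F G : ℝ → Matrix (Fin 2) (Fin 2) ℂ) (x : ℝ) (i j : Fin 2) :
    mWr F G x i j =
      (deriv (fun t => F t 0 i) x * G x 0 j - F x 0 i * deriv (fun t => G t 0 j) x)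
      + (deriv (fun t => F t 1 i) x * G x 1 j - F x 1 i * deriv (fun t => G t 1 j) x) := by
  simp only [mWr, mderiv, Matrix.sub_apply, Matrix.mul_apply, Fin.sum_univ_two,
    Matrix.transpose_apply, Matrix.of_apply]
  ring

lemma pair_hd (hF : ∀ j : Fin 2, IsSolution V₁ V₂ z (col F j))
    (hG : ∀ j : Fin 2, IsSolution V₁ V₂ z (col G j)) (i j k : Fin 2) (u : ℝ) :
    HasDerivAt
      (fun t => deriv (fun s => F s k i) t * G t k j - F t k i * deriv (fun s => G s k j) t)
      ((Acoef V₁ V₂ z u k 0 * F u 0 i + Acoef V₁ V₂ z u k 1 * F u 1 i) * G u k j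
        - F u k i * (Acoef V₁ V₂ z u k 0 * G u 0 j + Acoef V₁ V₂ z u k 1 * G u 1 j)) u := by
  have hf := ((entry_diff hF k i) u).hasDerivAt
  have hf2 := entry_hd2 hF k i u
  have hg := ((entry_diff hG k j) u).hasDerivAt
  have hg2 := entry_hd2 hG k j u
  have h := (hf2.mul hg).sub (hf.mul hg2)
  refine h.congr_deriv ?_
  ring

lemma wr_hasDeriv (hF : ∀ j : Fin 2, IsSolution V₁ V₂ z (col F j))
    (hG : ∀ j : Fin 2, IsSolution V₁ V₂ z (col G j)) (i j : Fin 2) (u : ℝ) :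
    HasDerivAt (fun t => mWr F G t i j) 0 u := by
  have h := (pair_hd hF hG i j 0 u).add (pair_hd hF hG i j 1 u)
  have hfun : (fun t => mWr F G t i j) = fun t =>
      (deriv (fun s => F s 0 i) t * G t 0 j - F t 0 i * deriv (fun s => G s 0 j) t)
      + (deriv (fun s => F s 1 i) t * G t 1 j - F t 1 i * deriv (fun s => G s 1 j) t) := by
    funext t; exact mWr_apply F G t i j
  rw [hfun]
  refine h.congr_deriv ?_
  fin_cases i <;> fin_cases j <;>
    simp only [Acoef, Fin.isValue, Fin.mk_zero, Fin.mk_one, Matrix.cons_val_zero,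
      Matrix.cons_val_one, Matrix.head_cons] <;> ring

lemma wr_const (hF : ∀ j : Fin 2, IsSolution V₁ V₂ z (col F j))
    (hG : ∀ j : Fin 2, IsSolution V₁ V₂ z (col G j)) (x y : ℝ) :
    mWr F G x = mWr F G y := by
  ext i j
  exact is_const_of_deriv_eq_zero
    (fun u => (wr_hasDeriv hF hG i j u).differentiableAt)
    (fun u => (wr_hasDeriv hF hG i j u).deriv) x y

lemma combo_deriv (hF : ∀ j : Fin 2, IsSolution V₁ V₂ z (col F j))
    (hG : ∀ j : Fin 2, IsSolution V₁ V₂ z (col G j)) (a b : Fin 2 → ℂ)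
    (hsol : ∀ x, F x *ᵥ a + G x *ᵥ b = 0) (x : ℝ) :
    mderiv F x *ᵥ a + mderiv G x *ᵥ b = 0 := by
  ext i
  have hφ : (fun t => F t i 0 * a 0 + F t i 1 * a 1 + (G t i 0 * b 0 + G t i 1 * b 1))
      = fun _ : ℝ => (0:ℂ) := by
    funext t
    have h := congrFun (hsol t) i
    fin_cases i <;> simpa [Matrix.mulVec, dotProduct, Fin.sum_univ_two] using h
  have hD : HasDerivAt (fun t => F t i 0 * a 0 + F t i 1 * a 1 + (G t i 0 * b 0 + G t i 1 * b 1))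
      (deriv (fun t => F t i 0) x * a 0 + deriv (fun t => F t i 1) x * a 1
        + (deriv (fun t => G t i 0) x * b 0 + deriv (fun t => G t i 1) x * b 1)) x :=
    ((((entry_diff hF i 0) x).hasDerivAt.mul_const _).add
        (((entry_diff hF i 1) x).hasDerivAt.mul_const _)).add
      ((((entry_diff hG i 0) x).hasDerivAt.mul_const _).add
        (((entry_diff hG i 1) x).hasDerivAt.mul_const _))
  rw [hφ] at hD
  have h0 := hD.unique (hasDerivAt_const x 0)
  show (mderiv F x *ᵥ a + mderiv G x *ᵥ b) i = 0
  simp only [mderiv, Pi.add_apply, Matrix.mulVec, dotProduct, Fin.sum_univ_two,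
    Matrix.of_apply]
  linear_combination h0

lemma wr_mulVec (F G : ℝ → Matrix (Fin 2) (Fin 2) ℂ) (x : ℝ) (v : Fin 2 → ℂ) :
    mWr F G x *ᵥ v = (mderiv F x)ᵀ *ᵥ (G x *ᵥ v) - (F x)ᵀ *ᵥ (mderiv G x *ᵥ v) := by
  rw [mWr, Matrix.sub_mulVec, Matrix.mulVec_mulVec, Matrix.mulVec_mulVec]

lemma wrT_mulVec (F G : ℝ → Matrix (Fin 2) (Fin 2) ℂ) (x : ℝ) (v : Fin 2 → ℂ) :
    (mWr F G x)ᵀ *ᵥ v = (G x)ᵀ *ᵥ (mderiv F x *ᵥ v) - (mderiv G x)ᵀ *ᵥ (F x *ᵥ v) := by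
  rw [mWr, Matrix.transpose_sub, Matrix.transpose_mul, Matrix.transpose_mul,
    Matrix.transpose_transpose, Matrix.transpose_transpose, Matrix.sub_mulVec,
    Matrix.mulVec_mulVec, Matrix.mulVec_mulVec]

lemma det_zero_of_kernel {M : Matrix (Fin 2) (Fin 2) ℂ} {v : Fin 2 → ℂ} (hv : v ≠ 0)
    (h : M *ᵥ v = 0) : M.det = 0 :=
  (Matrix.exists_mulVec_eq_zero_iff).mp ⟨v, hv, h⟩

lemma backward (hF : ∀ j : Fin 2, IsSolution V₁ V₂ z (col F j))
    (hG : ∀ j : Fin 2, IsSolution V₁ V₂ z (col G j))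
    (hW : (∀ x, mWr F F x = 0) ∨ (∀ x, mWr G G x = 0))
    (a b : Fin 2 → ℂ) (hab : ¬(a = 0 ∧ b = 0))
    (hsol : ∀ x, F x *ᵥ a + G x *ᵥ b = 0) (x : ℝ) :
    (mWr F G x).det = 0 := by
  have hsol' := combo_deriv hF hG a b hsol
  rcases hW with hW | hW
  · by_cases hb : b = 0
    · have ha : a ≠ 0 := fun h => hab ⟨h, hb⟩
      have hFa : F x *ᵥ a = 0 := by have := hsol x; simpa [hb] using this
      have hFa' : mderiv F x *ᵥ a = 0 := by have := hsol' x; simpa [hb] using this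
      have hker : (mWr F G x)ᵀ *ᵥ a = 0 := by
        rw [wrT_mulVec, hFa, hFa']; simp
      rw [← Matrix.det_transpose]
      exact det_zero_of_kernel ha hker
    · have h1 : G x *ᵥ b = -(F x *ᵥ a) := eq_neg_of_add_eq_zero_right (hsol x)
      have h2 : mderiv G x *ᵥ b = -(mderiv F x *ᵥ a) := eq_neg_of_add_eq_zero_right (hsol' x)
      have hker : mWr F G x *ᵥ b = 0 := by
        have : mWr F G x *ᵥ b = -(mWr F F x *ᵥ a) := by
          rw [wr_mulVec, h1, h2, wr_mulVec]
          simp only [Matrix.mulVec_neg]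
          abel
        rw [this, hW x]; simp
      exact det_zero_of_kernel hb hker
  · by_cases ha : a = 0
    · have hb : b ≠ 0 := fun h => hab ⟨ha, h⟩
      have hGb : G x *ᵥ b = 0 := by have := hsol x; simpa [ha] using this
      have hGb' : mderiv G x *ᵥ b = 0 := by have := hsol' x; simpa [ha] using this
      have hker : mWr F G x *ᵥ b = 0 := by rw [wr_mulVec, hGb, hGb']; simp
      exact det_zero_of_kernel hb hker
    · have h1 : F x *ᵥ a = -(G x *ᵥ b) := eq_neg_of_add_eq_zero_left (hsol x)
      have h2 : mderiv F x *ᵥ a = -(mderiv G x *ᵥ b) := eq_neg_of_add_eq_zero_left (hsol' x)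
      have hker : (mWr F G x)ᵀ *ᵥ a = 0 := by
        have : (mWr F G x)ᵀ *ᵥ a = mWr G G x *ᵥ b := by
          rw [wrT_mulVec, h1, h2, wr_mulVec]
          simp only [Matrix.mulVec_neg]
          abel
        rw [this, hW x]; simp
      rw [← Matrix.det_transpose]
      exact det_zero_of_kernel ha hker

lemma Acoef_bound {γ : ℝ} (hV : PotentialHyp γ V₁ V₂) (z : ℂ) :
    ∃ M : ℝ, 0 ≤ M ∧ ∀ (t : ℝ) (i j : Fin 2), ‖Acoef V₁ V₂ z t i j‖ ≤ M := by
  obtain ⟨C, hC⟩ := hV.2.2.2.2.2.2 0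
  have hVb : ∀ t, |V₁ t| ≤ |C| ∧ |V₂ t| ≤ |C| := by
    intro t
    have h := hC t
    simp only [iteratedDeriv_zero] at h
    have he : Real.exp (-γ * |t|) ≤ 1 := by
      rw [Real.exp_le_one_iff]
      have := abs_nonneg t
      nlinarith [hV.1]
    have hCe : C * Real.exp (-γ * |t|) ≤ |C| := by
      calc C * Real.exp (-γ * |t|) ≤ |C| * Real.exp (-γ * |t|) := by
            exact mul_le_mul_of_nonneg_right (le_abs_self C) (Real.exp_nonneg _)
        _ ≤ |C| * 1 := by exact mul_le_mul_of_nonneg_left he (abs_nonneg C)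
        _ = |C| := mul_one _
    constructor <;> nlinarith [abs_nonneg (V₁ t), abs_nonneg (V₂ t)]
  refine ⟨1 + ‖z‖ + |C|, by positivity, fun t i j => ?_⟩
  have h1 : ‖((V₁ t : ℂ))‖ ≤ |C| := by
    rw [Complex.norm_real, Real.norm_eq_abs]; exact (hVb t).1
  have h2 : ‖((V₂ t : ℂ))‖ ≤ |C| := by
    rw [Complex.norm_real, Real.norm_eq_abs]; exact (hVb t).2
  have hz : (0:ℝ) ≤ ‖z‖ := norm_nonneg z
  fin_cases i <;> fin_cases j <;>
    simp only [Acoef, Fin.isValue, Fin.mk_zero, Fin.mk_one, Matrix.cons_val_zero,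
      Matrix.cons_val_one, Matrix.head_cons]
  · calc ‖1 + (V₁ t : ℂ) - z‖ ≤ ‖1 + (V₁ t : ℂ)‖ + ‖z‖ := norm_sub_le _ _
      _ ≤ ‖(1:ℂ)‖ + ‖(V₁ t : ℂ)‖ + ‖z‖ := by linarith [norm_add_le (1:ℂ) ((V₁ t : ℂ))]
      _ ≤ 1 + ‖z‖ + |C| := by rw [norm_one]; linarith
  · linarith
  · linarith
  · calc ‖1 + (V₁ t : ℂ) + z‖ ≤ ‖1 + (V₁ t : ℂ)‖ + ‖z‖ := norm_add_le _ _
      _ ≤ ‖(1:ℂ)‖ + ‖(V₁ t : ℂ)‖ + ‖z‖ := by linarith [norm_add_le (1:ℂ) ((V₁ t : ℂ))]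
      _ ≤ 1 + ‖z‖ + |C| := by rw [norm_one]; linarith

abbrev Esp := (Fin 2 → ℂ) × (Fin 2 → ℂ)

def vfield (V₁ V₂ : ℝ → ℝ) (z : ℂ) (t : ℝ) (p : Esp) : Esp :=
  (p.2, fun i => Acoef V₁ V₂ z t i 0 * p.1 0 + Acoef V₁ V₂ z t i 1 * p.1 1)

lemma vfield_lipschitz {γ : ℝ} (hV : PotentialHyp γ V₁ V₂) (z : ℂ) :
    ∃ K : NNReal, ∀ t, LipschitzWith K (vfield V₁ V₂ z t) := by
  obtain ⟨M, hM0, hA⟩ := Acoef_bound hV z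
  refine ⟨Real.toNNReal (2 * M + 1), fun t => ?_⟩
  apply LipschitzWith.of_dist_le_mul
  intro p q
  have hK : (Real.toNNReal (2 * M + 1) : ℝ) = 2 * M + 1 :=
    Real.coe_toNNReal _ (by linarith)
  rw [hK]
  have hd : (0:ℝ) ≤ dist p q := dist_nonneg
  have hcomp : ∀ k : Fin 2, ‖p.1 k - q.1 k‖ ≤ dist p q := fun k => by
    rw [← dist_eq_norm]
    exact (dist_le_pi_dist p.1 q.1 k).trans (by rw [Prod.dist_eq]; exact le_max_left _ _)
  rw [vfield, vfield, Prod.dist_eq]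
  apply max_le
  · calc dist p.2 q.2 ≤ dist p q := by rw [Prod.dist_eq]; exact le_max_right _ _
      _ = 1 * dist p q := (one_mul _).symm
      _ ≤ (2 * M + 1) * dist p q := by
        apply mul_le_mul_of_nonneg_right _ hd; linarith
  · rw [dist_pi_le_iff (by positivity)]
    intro i
    rw [dist_eq_norm]
    have e : (Acoef V₁ V₂ z t i 0 * p.1 0 + Acoef V₁ V₂ z t i 1 * p.1 1)
        - (Acoef V₁ V₂ z t i 0 * q.1 0 + Acoef V₁ V₂ z t i 1 * q.1 1)
        = Acoef V₁ V₂ z t i 0 * (p.1 0 - q.1 0) + Acoef V₁ V₂ z t i 1 * (p.1 1 - q.1 1) := by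
      ring
    rw [e]
    calc ‖Acoef V₁ V₂ z t i 0 * (p.1 0 - q.1 0) + Acoef V₁ V₂ z t i 1 * (p.1 1 - q.1 1)‖
        ≤ ‖Acoef V₁ V₂ z t i 0 * (p.1 0 - q.1 0)‖ + ‖Acoef V₁ V₂ z t i 1 * (p.1 1 - q.1 1)‖ :=
          norm_add_le _ _
      _ = ‖Acoef V₁ V₂ z t i 0‖ * ‖p.1 0 - q.1 0‖ + ‖Acoef V₁ V₂ z t i 1‖ * ‖p.1 1 - q.1 1‖ := by
          rw [norm_mul, norm_mul]
      _ ≤ M * dist p q + M * dist p q :=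
          add_le_add (mul_le_mul (hA t i 0) (hcomp 0) (norm_nonneg _) hM0)
            (mul_le_mul (hA t i 1) (hcomp 1) (norm_nonneg _) hM0)
      _ ≤ (2 * M + 1) * dist p q := by nlinarith

lemma ode_unique_zero {γ : ℝ} (hV : PotentialHyp γ V₁ V₂)
    (hF : ∀ j : Fin 2, IsSolution V₁ V₂ z (col F j))
    (hG : ∀ j : Fin 2, IsSolution V₁ V₂ z (col G j))
    (a b : Fin 2 → ℂ)
    (h0 : F 0 *ᵥ a + G 0 *ᵥ b = 0) (h0' : mderiv F 0 *ᵥ a + mderiv G 0 *ᵥ b = 0) (x : ℝ) :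
    F x *ᵥ a + G x *ᵥ b = 0 := by
  classical
  set A := Acoef V₁ V₂ z with hA
  set φ : Fin 2 → ℝ → ℂ := fun i t =>
    F t i 0 * a 0 + F t i 1 * a 1 + (G t i 0 * b 0 + G t i 1 * b 1) with hφ
  set ψ : Fin 2 → ℝ → ℂ := fun i t =>
    deriv (fun s => F s i 0) t * a 0 + deriv (fun s => F s i 1) t * a 1
      + (deriv (fun s => G s i 0) t * b 0 + deriv (fun s => G s i 1) t * b 1) with hψ
  have hd1 : ∀ (i : Fin 2) (t : ℝ), HasDerivAt (φ i) (ψ i t) t := fun i t =>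
    ((((entry_diff hF i 0) t).hasDerivAt.mul_const _).add
        (((entry_diff hF i 1) t).hasDerivAt.mul_const _)).add
      ((((entry_diff hG i 0) t).hasDerivAt.mul_const _).add
        (((entry_diff hG i 1) t).hasDerivAt.mul_const _))
  have hd2 : ∀ (i : Fin 2) (t : ℝ),
      HasDerivAt (ψ i) (A t i 0 * φ 0 t + A t i 1 * φ 1 t) t := by
    intro i t
    have h := (((entry_hd2 hF i 0 t).mul_const (a 0)).add
        ((entry_hd2 hF i 1 t).mul_const (a 1))).add
      (((entry_hd2 hG i 0 t).mul_const (b 0)).add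
        ((entry_hd2 hG i 1 t).mul_const (b 1)))
    refine h.congr_deriv ?_
    simp only [hφ, hA]
    ring
  set u : ℝ → Esp := fun t => (fun i => φ i t, fun i => ψ i t) with hu
  have hdu : ∀ t, HasDerivAt u (vfield V₁ V₂ z t (u t)) t := by
    intro t
    exact HasDerivAt.prodMk (hasDerivAt_pi.2 fun i => hd1 i t)
      (hasDerivAt_pi.2 fun i => hd2 i t)
  have hvz : ∀ t, vfield V₁ V₂ z t (0 : Esp) = 0 := by
    intro t
    simp only [vfield]
    refine Prod.ext rfl ?_
    funext i
    simp
  obtain ⟨K, hK⟩ := vfield_lipschitz hV z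
  have hφ0 : ∀ i, φ i 0 = 0 := by
    intro i
    have h := congrFun h0 i
    simp only [Matrix.mulVec, dotProduct, Fin.sum_univ_two, Pi.add_apply,
      Pi.zero_apply] at h
    show F 0 i 0 * a 0 + F 0 i 1 * a 1 + (G 0 i 0 * b 0 + G 0 i 1 * b 1) = 0
    linear_combination h
  have hψ0 : ∀ i, ψ i 0 = 0 := by
    intro i
    have h := congrFun h0' i
    simp only [Matrix.mulVec, dotProduct, Fin.sum_univ_two, Pi.add_apply,
      Pi.zero_apply, mderiv, Matrix.of_apply] at h
    show deriv (fun s => F s i 0) 0 * a 0 + deriv (fun s => F s i 1) 0 * a 1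
      + (deriv (fun s => G s i 0) 0 * b 0 + deriv (fun s => G s i 1) 0 * b 1) = 0
    linear_combination h
  have hu0 : u 0 = 0 := Prod.ext (funext fun i => hφ0 i) (funext fun i => hψ0 i)
  have hmem : x ∈ Set.Icc (-(|x| + 1)) (|x| + 1) := by
    constructor
    · linarith [neg_abs_le x]
    · linarith [le_abs_self x]
  have key : Set.EqOn u 0 (Set.Icc (-(|x| + 1)) (|x| + 1)) := by
    apply ODE_solution_unique_of_mem_Icc
      (v := vfield V₁ V₂ z) (K := K) (s := fun _ => Set.univ)
      (fun t _ => (hK t).lipschitzOnWith)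
      (t₀ := (0:ℝ))
    · constructor
      · nlinarith [abs_nonneg x]
      · positivity
    · exact fun t _ => (hdu t).continuousAt.continuousWithinAt
    · exact fun t _ => hdu t
    · exact fun t _ => Set.mem_univ _
    · exact continuousOn_const
    · intro t _
      have h := hasDerivAt_const t (0 : Esp)
      simpa [Pi.zero_apply, hvz t] using h
    · exact fun t _ => Set.mem_univ _
    · simpa using hu0
  have hux : u x = 0 := key hmem
  have hx : ∀ i, φ i x = 0 := by
    intro i
    have h := congrFun (congrArg Prod.fst hux) i
    simpa using h
  ext i
  have h := hx i
  simp only [hφ] at h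
  simp only [Matrix.mulVec, dotProduct, Fin.sum_univ_two, Pi.add_apply, Pi.zero_apply]
  linear_combination h

lemma wr_GF (F G : ℝ → Matrix (Fin 2) (Fin 2) ℂ) (x : ℝ) :
    mWr G F x = -(mWr F G x)ᵀ := by
  simp only [mWr, Matrix.transpose_sub, Matrix.transpose_mul, Matrix.transpose_transpose]
  abel

lemma forward {γ : ℝ} (hV : PotentialHyp γ V₁ V₂)
    (hF : ∀ j : Fin 2, IsSolution V₁ V₂ z (col F j))
    (hG : ∀ j : Fin 2, IsSolution V₁ V₂ z (col G j))
    (hW : (∀ x, mWr F F x = 0) ∨ (∀ x, mWr G G x = 0))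
    (hdet : ∀ x, (mWr F G x).det = 0) :
    ∃ a b : Fin 2 → ℂ, ¬(a = 0 ∧ b = 0) ∧ ∀ x, F x *ᵥ a + G x *ᵥ b = 0 := by
  classical
  set U : Matrix (Fin 2 ⊕ Fin 2) (Fin 2 ⊕ Fin 2) ℂ :=
    Matrix.fromBlocks (F 0) (G 0) (mderiv F 0) (mderiv G 0) with hU
  set J : Matrix (Fin 2 ⊕ Fin 2) (Fin 2 ⊕ Fin 2) ℂ := Matrix.fromBlocks 0 1 (-1) 0 with hJ
  have hJJ : J * J = -1 := by
    rw [hJ, Matrix.fromBlocks_multiply]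
    simp only [Matrix.zero_mul, Matrix.one_mul, Matrix.mul_one, Matrix.mul_neg,
      Matrix.neg_mul, Matrix.mul_zero, zero_add, add_zero, neg_zero, mul_zero, mul_one]
    have : (-1 : Matrix (Fin 2 ⊕ Fin 2) (Fin 2 ⊕ Fin 2) ℂ)
        = Matrix.fromBlocks (-1) (-0) (-0) (-1) := by
      rw [← Matrix.fromBlocks_neg, Matrix.fromBlocks_one]
    rw [this, neg_zero]
  have hdetJ : J.det ≠ 0 := by
    intro h
    have h2 : (J * J).det = 0 := by rw [Matrix.det_mul, h, mul_zero]
    rw [hJJ] at h2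
    rw [show (-1 : Matrix (Fin 2 ⊕ Fin 2) (Fin 2 ⊕ Fin 2) ℂ) = -(1) from rfl,
      Matrix.det_neg, Matrix.det_one, Fintype.card_sum, Fintype.card_fin] at h2
    norm_num at h2
  have hUJU : Uᵀ * J * U = Matrix.fromBlocks (-(mWr F F 0)) (-(mWr F G 0))
      (-(mWr G F 0)) (-(mWr G G 0)) := by
    rw [hU, hJ, Matrix.fromBlocks_transpose, Matrix.mul_assoc, Matrix.fromBlocks_multiply,
      Matrix.fromBlocks_multiply]
    simp only [Matrix.zero_mul, Matrix.one_mul, Matrix.neg_mul, Matrix.mul_neg,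
      zero_add, add_zero, mWr, neg_sub]
    congr 1
  -- find nonzero kernel vector of Uᵀ * J * U
  have hker : ∃ v : Fin 2 ⊕ Fin 2 → ℂ, v ≠ 0 ∧ (Uᵀ * J * U) *ᵥ v = 0 := by
    rcases hW with hWff | hWgg
    · obtain ⟨c, hc0, hcW⟩ := (Matrix.exists_mulVec_eq_zero_iff).mpr
        (show ((mWr F G 0)ᵀ).det = 0 by rw [Matrix.det_transpose]; exact hdet 0)
      refine ⟨Sum.elim c 0, ?_, ?_⟩
      · intro h
        apply hc0
        funext i
        exact congrFun h (Sum.inl i)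
      · rw [hUJU, Matrix.fromBlocks_mulVec]
        have e1 : (Sum.elim c (0 : Fin 2 → ℂ)) ∘ Sum.inl = c := rfl
        have e2 : (Sum.elim c (0 : Fin 2 → ℂ)) ∘ Sum.inr = 0 := rfl
        rw [e1, e2, hWff 0, wr_GF F G 0]
        funext s
        cases s with
        | inl i => simp
        | inr i =>
          simp only [Sum.elim_inr, Matrix.mulVec_zero, add_zero, neg_neg, Pi.zero_apply]
          rw [hcW]
          simp
    · obtain ⟨c, hc0, hcW⟩ := (Matrix.exists_mulVec_eq_zero_iff).mpr (hdet 0)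
      refine ⟨Sum.elim 0 c, ?_, ?_⟩
      · intro h
        apply hc0
        funext i
        exact congrFun h (Sum.inr i)
      · rw [hUJU, Matrix.fromBlocks_mulVec]
        have e1 : (Sum.elim (0 : Fin 2 → ℂ) c) ∘ Sum.inl = 0 := rfl
        have e2 : (Sum.elim (0 : Fin 2 → ℂ) c) ∘ Sum.inr = c := rfl
        rw [e1, e2, hWgg 0]
        funext s
        cases s with
        | inl i =>
          simp only [Sum.elim_inl, Matrix.mulVec_zero, zero_add, Matrix.neg_mulVec,
            Pi.zero_apply, Pi.neg_apply]
          rw [hcW]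
          simp
        | inr i => simp
  obtain ⟨v, hv0, hv⟩ := hker
  have hdetU : U.det = 0 := by
    have h := (Matrix.exists_mulVec_eq_zero_iff).mp ⟨v, hv0, hv⟩
    rw [Matrix.det_mul, Matrix.det_mul, Matrix.det_transpose] at h
    rcases mul_eq_zero.mp h with h' | h'
    · rcases mul_eq_zero.mp h' with h'' | h''
      · exact h''
      · exact absurd h'' hdetJ
    · exact h'
  obtain ⟨w, hw0, hUw⟩ := (Matrix.exists_mulVec_eq_zero_iff).mpr hdetU
  refine ⟨w ∘ Sum.inl, w ∘ Sum.inr, ?_, ?_⟩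
  · rintro ⟨ha, hb⟩
    apply hw0
    funext s
    cases s with
    | inl i => exact congrFun ha i
    | inr i => exact congrFun hb i
  · rw [hU, Matrix.fromBlocks_mulVec] at hUw
    have h1 : F 0 *ᵥ (w ∘ Sum.inl) + G 0 *ᵥ (w ∘ Sum.inr) = 0 := by
      funext i
      exact congrFun hUw (Sum.inl i)
    have h2 : mderiv F 0 *ᵥ (w ∘ Sum.inl) + mderiv G 0 *ᵥ (w ∘ Sum.inr) = 0 := by
      funext i
      exact congrFun hUw (Sum.inr i)
    exact ode_unique_zero hV hF hG _ _ h1 h2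

theorem stmt_8 (γ : ℝ) (V₁ V₂ : ℝ → ℝ) (hV : PotentialHyp γ V₁ V₂)
    (z : ℂ) (F G : ℝ → Matrix (Fin 2) (Fin 2) ℂ)
    (hF : ∀ j : Fin 2, IsSolution V₁ V₂ z (col F j))
    (hG : ∀ j : Fin 2, IsSolution V₁ V₂ z (col G j)) :
    (∀ x y : ℝ, mWr F G x = mWr F G y) ∧
    (((∀ x : ℝ, mWr F F x = 0) ∨ (∀ x : ℝ, mWr G G x = 0)) →
      ((∀ x : ℝ, (mWr F G x).det = 0) ↔
        ∃ a b : Fin 2 → ℂ, ¬(a = 0 ∧ b = 0) ∧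
          ∀ x : ℝ, F x *ᵥ a + G x *ᵥ b = 0)) := by
  constructor
  · exact wr_const hF hG
  · intro hW
    constructor
    · intro hdet
      exact forward hV hF hG hW hdet
    · rintro ⟨a, b, hab, hsol⟩ x
      exact backward hF hG hW a b hab hsol x
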